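/- Let ℓ ≥ 1. For every real s, ∫₀^∞ ψ⁺_ℓ(u) u^{1/2 - i s} (du/u) = π^{-(1/2 - i s)/2} Γ((1/2 - i s)/2) · P⁺_ℓ(s). Moreover P⁺_ℓ, viewed as a polynomial in ℂ[X], is divisible by 1/4 + X² (in particular P⁺_ℓ(i/2) = 0), is even, and has real coefficients. -/

import Mathlib

open MeasureTheory Complex Polynomial

/-- The function `ψ⁺_ℓ`. -/
noncomputable def psiPlus (l : ℕ) (x : ℝ) : ℝ :=
  ∑ k ∈ Finset.Icc 1 (2 * l),
    (-1 : ℝ) ^ k * (2 : ℝ) ^ ((3 * (k : ℝ)) - 2 * l + 1 / 4) *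
      Real.sqrt ((4 * l).factorial) / ((2 * l - k).factorial * (2 * k).factorial) *
      Real.pi ^ k * x ^ (2 * k) * Real.exp (-Real.pi * x ^ 2)

/-- The polynomial `P⁺_ℓ ∈ ℂ[X]`. -/
noncomputable def Pplus (l : ℕ) : Polynomial ℂ :=
  ∑ k ∈ Finset.Icc 1 (2 * l),
    Polynomial.C ((-1 : ℂ) ^ k * (((2 : ℝ) ^ ((3 * (k : ℝ)) - 2 * l - 3 / 4) : ℝ) : ℂ) *
        ((Real.sqrt ((4 * l).factorial) : ℝ) : ℂ) /
        (((2 * l - k).factorial : ℂ) * ((2 * k).factorial : ℂ))) *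
      ∏ j ∈ Finset.range k,
        (Polynomial.C ((j : ℂ) + 1 / 4) - Polynomial.C (Complex.I / 2) * Polynomial.X)

/-!
Each summand of `ψ⁺_ℓ` is a Gaussian moment `t ^ (2k) e^(-π t²)`, whose Mellin transform is
`Γℝ(s) (s/2)_k / (2 π^k)`; summing gives `Γℝ(s) P⁺_ℓ(i (s - 1/2))`, the Mellin formula.

For the polynomial, `P⁺_ℓ(w)` is a real multiple of `F_{2ℓ}(1/4 - i w/2) - 1`, where
`F_m(b) = ₂F₁(-m, b; 1/2; 2)`. A Zeilberger certificate gives the three-term recurrence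
`(2m+3) F_{m+2} + (4b-1) F_{m+1} - (2m+2) F_m = 0`, and since its solutions are determined by
`F_0, F_1`, it yields `F_m(1/2 - b) = (-1)^m F_m(b)` and `F_m(1/2) = (-1)^m`. The first identity
makes `P⁺_ℓ` even, the second makes `±i/2` roots, and evenness together with the reality of the
coefficients of `F_m` gives `P⁺_ℓ(conj w) = conj (P⁺_ℓ w)`, i.e. real coefficients.
-/

open Finset ComplexConjugate
open scoped Real

lemma ascPochhammer_eval_eq_prod_range {R : Type*} [CommSemiring R] (n : ℕ) (r : R) :
    (ascPochhammer R n).eval r = ∏ j ∈ range n, (r + j) := by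
  induction n with
  | zero => simp
  | succ n ih => rw [ascPochhammer_succ_eval, ih, prod_range_succ]

lemma descPochhammer_succ_eval_add_one {R : Type*} [CommRing R] (x : R) (k : ℕ) :
    (descPochhammer R (k + 1)).eval (x + 1) = (x + 1) * (descPochhammer R k).eval x := by
  simp [descPochhammer_succ_left, eval_comp]

lemma Polynomial.X_sq_sub_C_sq_dvd {K : Type*} [Field K] {p : K[X]} {a : K} (ha : a ≠ -a)
    (hpa : p.IsRoot a) (hpa' : p.IsRoot (-a)) : X ^ 2 - C (a ^ 2) ∣ p := by
  have hcop : IsCoprime (X - C a) (X - C (-a)) :=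
    isCoprime_X_sub_C_of_isUnit_sub (sub_ne_zero.mpr ha).isUnit
  convert hcop.mul_dvd (dvd_iff_isRoot.mpr hpa) (dvd_iff_isRoot.mpr hpa') using 1
  rw [C_neg, C_pow]
  ring

lemma Polynomial.im_coeff_eq_zero_of_eval_conj {p : ℂ[X]}
    (h : ∀ z, p.eval (conj z) = conj (p.eval z)) (k : ℕ) : (p.coeff k).im = 0 := by
  have hp : p.map (starRingEnd ℂ) = p := Polynomial.funext fun z ↦ by
    rw [← conj_conj z, eval_map_apply, h, conj_conj, conj_conj]
  exact conj_eq_iff_im.mp (by rw [← coeff_map, hp])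

lemma eq_of_three_term_recurrence {c : ℂ} {f g : ℕ → ℂ}
    (hf : ∀ m : ℕ, (2 * m + 3) * f (m + 2) + c * f (m + 1) - (2 * m + 2) * f m = 0)
    (hg : ∀ m : ℕ, (2 * m + 3) * g (m + 2) + c * g (m + 1) - (2 * m + 2) * g m = 0)
    (h0 : f 0 = g 0) (h1 : f 1 = g 1) : f = g := by
  funext m
  induction m using Nat.twoStepInduction with
  | zero => exact h0
  | one => exact h1
  | more m ih ih' =>
    have hm : (2 * m + 3 : ℂ) ≠ 0 := by norm_cast
    apply mul_left_cancel₀ hm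
    linear_combination hf m - hg m - c * ih' + (2 * m + 2) * ih

lemma mellin_eq_setIntegral_mul_cpow_div (f : ℝ → ℂ) (s : ℂ) :
    mellin f s = ∫ t in Set.Ioi (0 : ℝ), f t * (t : ℂ) ^ s / t := by
  refine setIntegral_congr_fun measurableSet_Ioi fun t ht ↦ ?_
  rw [cpow_sub _ _ (ofReal_ne_zero.mpr (ne_of_gt ht)), cpow_one, smul_eq_mul]
  ring

lemma hasMellin_finsetSum {E ι : Type*} [NormedAddCommGroup E] [NormedSpace ℂ E]
    (u : Finset ι) {f : ι → ℝ → E} {m : ι → E} {s : ℂ} (hf : ∀ i ∈ u, HasMellin (f i) s (m i)) :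
    HasMellin (fun t ↦ ∑ i ∈ u, f i t) s (∑ i ∈ u, m i) := by
  refine ⟨?_, ?_⟩
  · simp only [MellinConvergent, smul_sum]
    exact integrable_finsetSum u fun i hi ↦ (hf i hi).1
  · simp only [mellin, smul_sum]
    rw [integral_finsetSum u fun i hi ↦ (hf i hi).1]
    exact sum_congr rfl fun i hi ↦ (hf i hi).2

lemma mellinConvergent_exp_neg {s : ℂ} (hs : 0 < s.re) :
    MellinConvergent (fun t : ℝ ↦ (Real.exp (-t) : ℂ)) s := by
  refine (GammaIntegral_convergent hs).congr_fun (fun t _ ↦ ?_) measurableSet_Ioi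
  simp [ofReal_exp, mul_comm]

lemma hasMellin_exp_neg_pi_mul_sq {s : ℂ} (hs : 0 < s.re) :
    HasMellin (fun t : ℝ ↦ (Real.exp (-π * t ^ 2) : ℂ)) s (Gammaℝ s / 2) := by
  have hs2 : 0 < (s / 2).re := by rw [div_ofNat_re]; positivity
  set f : ℝ → ℂ := fun v ↦ Real.exp (-v)
  have hsq : (fun t : ℝ ↦ (Real.exp (-π * t ^ 2) : ℂ)) = fun t ↦ f (π * t ^ (2 : ℝ)) := by
    ext t; simp [f, neg_mul]
  rw [hsq]
  refine ⟨(MellinConvergent.comp_rpow (f := fun u ↦ f (π * u)) two_ne_zero).mpr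
    ((MellinConvergent.comp_mul_left Real.pi_pos).mpr (mellinConvergent_exp_neg hs2)), ?_⟩
  rw [mellin_comp_rpow (fun u ↦ f (π * u)), mellin_comp_mul_left _ _ Real.pi_pos,
    ← GammaIntegral_eq_mellin, ofReal_ofNat, ← Gamma_eq_integral hs2, Gammaℝ_def]
  simp only [smul_eq_mul, abs_two, neg_div, real_smul, ofReal_inv, ofReal_ofNat]
  ring

lemma Gammaℝ_add_two_mul_nat {s : ℂ} (hs : 0 < s.re) (k : ℕ) :
    Gammaℝ (s + 2 * k) = Gammaℝ s * (ascPochhammer ℂ k).eval (s / 2) / π ^ k := by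
  induction k with
  | zero => simp
  | succ k ih =>
    have hk : s + 2 * k ≠ 0 :=
      ne_zero_of_re_pos (by rw [← Nat.cast_ofNat, ← Nat.cast_mul, add_re, natCast_re]; positivity)
    have hπ : (π : ℂ) ≠ 0 := ofReal_ne_zero.mpr Real.pi_ne_zero
    rw [Nat.cast_succ, show s + 2 * (k + 1 : ℂ) = s + 2 * k + 2 by ring, Gammaℝ_add_two hk, ih,
      ascPochhammer_succ_eval]
    field_simp
    ring

lemma hasMellin_pow_mul_exp_neg_pi_mul_sq {s : ℂ} (hs : 0 < s.re) (k : ℕ) :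
    HasMellin (fun t : ℝ ↦ ((t ^ (2 * k) * Real.exp (-π * t ^ 2) : ℝ) : ℂ)) s
      (Gammaℝ s * (ascPochhammer ℂ k).eval (s / 2) / (2 * π ^ k)) := by
  have hs' : 0 < (s + (2 * k : ℕ)).re := by rw [add_re, natCast_re]; positivity
  have hf : (fun t : ℝ ↦ ((t ^ (2 * k) * Real.exp (-π * t ^ 2) : ℝ) : ℂ))
      = fun t : ℝ ↦ (t : ℂ) ^ ((2 * k : ℕ) : ℂ) • ((Real.exp (-π * t ^ 2) : ℝ) : ℂ) := by
    ext t; rw [cpow_natCast, smul_eq_mul]; push_cast; ring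
  obtain ⟨hconv, hval⟩ := hasMellin_exp_neg_pi_mul_sq hs'
  rw [hf]
  refine ⟨MellinConvergent.cpow_smul.mpr hconv, ?_⟩
  rw [mellin_cpow_smul, hval, Nat.cast_mul, Nat.cast_ofNat, Gammaℝ_add_two_mul_nat hs]
  ring

/-- The `k`-th term of `₂F₁(-x, b; 1/2; 2)`, written with `(2k)! = 4^k k! (1/2)_k`. The degree
enters through `descPochhammer` at a complex point `x`, so that the recurrence below is a
termwise identity in `x`. -/
noncomputable def hypergeomTerm (b x : ℂ) (k : ℕ) : ℂ :=
  (-8) ^ k * (descPochhammer ℂ k).eval x * (ascPochhammer ℂ k).eval b / ((2 * k).factorial : ℂ)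

lemma hypergeomTerm_zero (b x : ℂ) : hypergeomTerm b x 0 = 1 := by simp [hypergeomTerm]

noncomputable def hypergeomSum (b : ℂ) (m : ℕ) : ℂ :=
  ∑ k ∈ range (m + 1), hypergeomTerm b m k

noncomputable def zeilbergerCertificate (b x : ℂ) : ℕ → ℂ
  | 0 => 0
  | k + 1 => -(-8) ^ (k + 1) * (descPochhammer ℂ k).eval (x + 1) *
      (ascPochhammer ℂ (k + 1)).eval b / (2 * (2 * k).factorial)

lemma hypergeomTerm_recurrence (b x : ℂ) (k : ℕ) :
    (2 * x + 3) * hypergeomTerm b (x + 2) k + (4 * b - 1) * hypergeomTerm b (x + 1) k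
        - (2 * x + 2) * hypergeomTerm b x k
      = zeilbergerCertificate b x (k + 1) - zeilbergerCertificate b x k := by
  rcases k with _ | j
  · simp only [hypergeomTerm_zero, mul_one, zeilbergerCertificate, zero_add, pow_one, neg_neg,
      descPochhammer_zero, eval_one, ascPochhammer_one, eval_X, Nat.factorial_zero, Nat.cast_one,
      mul_zero, sub_zero]
    ring
  set D := (descPochhammer ℂ j).eval (x + 1)
  have hx2 : (descPochhammer ℂ (j + 1)).eval (x + 2) = (x + 2) * D := by
    rw [show x + 2 = (x + 1) + 1 by ring, descPochhammer_succ_eval_add_one]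
  have hx1 : (descPochhammer ℂ (j + 1)).eval (x + 1) = D * (x + 1 - j) :=
    descPochhammer_succ_eval j (x + 1)
  have hx0 : (2 * x + 2) * (descPochhammer ℂ (j + 1)).eval x = 2 * D * (x + 1 - j) * (x - j) := by
    have h := descPochhammer_succ_eval_add_one x (j + 1)
    rw [descPochhammer_succ_eval (j + 1), hx1] at h
    push_cast at h
    linear_combination -2 * h
  have hF : ((2 * (j + 1)).factorial : ℂ) = (2 * j + 2) * (2 * j + 1) * (2 * j).factorial := by
    rw [show 2 * (j + 1) = 2 * j + 1 + 1 by ring, Nat.factorial_succ, Nat.factorial_succ]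
    push_cast; ring
  have hF0 : ((2 * j).factorial : ℂ) ≠ 0 := Nat.cast_ne_zero.mpr (Nat.factorial_ne_zero _)
  have h1 : (2 * (j : ℂ) + 1) ≠ 0 := by norm_cast
  have h2 : (2 * (j : ℂ) + 2) ≠ 0 := by norm_cast
  simp only [hypergeomTerm, zeilbergerCertificate, hx2, hx1, ascPochhammer_succ_eval (j + 1) b, hF]
  field_simp
  push_cast
  linear_combination -2 * (-8) ^ (j + 1) * (ascPochhammer ℂ (j + 1)).eval b * hx0

lemma hypergeomTerm_eq_zero {b : ℂ} {m k : ℕ} (h : m < k) : hypergeomTerm b m k = 0 := by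
  simp [hypergeomTerm, descPochhammer_eval_eq_descFactorial, Nat.descFactorial_of_lt h]

lemma sum_range_hypergeomTerm (b : ℂ) {m N : ℕ} (h : m + 1 ≤ N) :
    ∑ k ∈ range N, hypergeomTerm b m k = hypergeomSum b m :=
  (sum_subset (range_subset_range.mpr h) fun _ _ hk ↦
    hypergeomTerm_eq_zero (by simpa using hk)).symm

lemma hypergeomSum_recurrence (b : ℂ) (m : ℕ) :
    (2 * m + 3) * hypergeomSum b (m + 2) + (4 * b - 1) * hypergeomSum b (m + 1)
      - (2 * m + 2) * hypergeomSum b m = 0 := by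
  rw [← sum_range_hypergeomTerm b (N := m + 3) le_rfl,
    ← sum_range_hypergeomTerm b (N := m + 3) (by omega),
    ← sum_range_hypergeomTerm b (N := m + 3) (by omega), mul_sum, mul_sum, mul_sum,
    ← sum_add_distrib, ← sum_sub_distrib]
  push_cast
  simp only [hypergeomTerm_recurrence]
  rw [sum_range_sub (zeilbergerCertificate b m)]
  -- the certificate vanishes at the top index, since `(m + 1).descFactorial (m + 2) = 0`
  simp only [zeilbergerCertificate]
  rw [show (m : ℂ) + 1 = ((m + 1 : ℕ) : ℂ) by push_cast; rfl,
    descPochhammer_eval_eq_descFactorial, Nat.descFactorial_of_lt (by omega)]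
  simp

lemma hypergeomSum_zero (b : ℂ) : hypergeomSum b 0 = 1 := by
  rw [hypergeomSum, sum_range_one, hypergeomTerm_zero]

lemma hypergeomSum_one (b : ℂ) : hypergeomSum b 1 = 1 - 4 * b := by
  rw [hypergeomSum, sum_range_succ, sum_range_one, hypergeomTerm_zero, hypergeomTerm]
  norm_num
  ring

lemma hypergeomSum_one_half_sub (b : ℂ) (m : ℕ) :
    hypergeomSum (1 / 2 - b) m = (-1) ^ m * hypergeomSum b m := by
  refine congrFun (eq_of_three_term_recurrence (c := 1 - 4 * b)
    (f := (hypergeomSum (1 / 2 - b) ·)) (g := fun m ↦ (-1) ^ m * hypergeomSum b m)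
    (fun m ↦ ?_) (fun m ↦ ?_) ?_ ?_) m
  · linear_combination hypergeomSum_recurrence (1 / 2 - b) m
  · linear_combination (-1) ^ m * hypergeomSum_recurrence b m
  · rw [hypergeomSum_zero, hypergeomSum_zero, pow_zero, one_mul]
  · rw [hypergeomSum_one, hypergeomSum_one]; ring

lemma hypergeomSum_one_half (m : ℕ) : hypergeomSum (1 / 2) m = (-1) ^ m := by
  refine congrFun (eq_of_three_term_recurrence (c := 1) (f := (hypergeomSum (1 / 2) ·))
    (g := ((-1) ^ ·)) (fun m ↦ ?_) (fun m ↦ ?_) ?_ ?_) m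
  · linear_combination hypergeomSum_recurrence (1 / 2) m
  · ring
  · rw [hypergeomSum_zero, pow_zero]
  · rw [hypergeomSum_one]; norm_num

lemma conj_hypergeomSum (b : ℂ) (m : ℕ) :
    conj (hypergeomSum b m) = hypergeomSum (conj b) m := by
  have h (k : ℕ) : conj ((ascPochhammer ℂ k).eval b) = (ascPochhammer ℂ k).eval (conj b) := by
    rw [← eval_map_apply, ascPochhammer_map]
  simp [hypergeomSum, hypergeomTerm, descPochhammer_eval_eq_descFactorial, h, map_ofNat]

noncomputable def pplusCoeff (l k : ℕ) : ℝ :=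
  (-1) ^ k * (2 : ℝ) ^ ((3 * (k : ℝ)) - 2 * l - 3 / 4) * Real.sqrt ((4 * l).factorial) /
    ((2 * l - k).factorial * (2 * k).factorial)

lemma Pplus_eval_eq_sum (l : ℕ) (w : ℂ) :
    (Pplus l).eval w =
      ∑ k ∈ Icc 1 (2 * l), pplusCoeff l k * (ascPochhammer ℂ k).eval (1 / 4 - I * w / 2) := by
  simp only [Pplus, eval_finsetSum, eval_mul, eval_C, eval_prod, eval_sub, eval_X,
    ascPochhammer_eval_eq_prod_range, pplusCoeff]
  push_cast
  exact sum_congr rfl fun k _ ↦ congrArg _ (prod_congr rfl fun j _ ↦ by ring)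

lemma psiPlus_eq_sum (l : ℕ) (x : ℝ) :
    psiPlus l x = ∑ k ∈ Icc 1 (2 * l),
      2 * pplusCoeff l k * π ^ k * (x ^ (2 * k) * Real.exp (-π * x ^ 2)) := by
  refine sum_congr rfl fun k _ ↦ ?_
  rw [pplusCoeff, show (3 * (k : ℝ)) - 2 * l + 1 / 4 = (3 * (k : ℝ)) - 2 * l - 3 / 4 + 1 by ring,
    Real.rpow_add_one two_ne_zero]
  ring

lemma hasMellin_psiPlus (l : ℕ) {s : ℂ} (hs : 0 < s.re) :
    HasMellin (fun t ↦ (psiPlus l t : ℂ)) s (Gammaℝ s * (Pplus l).eval (I * (s - 1 / 2))) := by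
  have hf : (fun t ↦ (psiPlus l t : ℂ)) = fun t ↦ ∑ k ∈ Icc 1 (2 * l),
      ((2 * pplusCoeff l k * π ^ k : ℝ) : ℂ) • ((t ^ (2 * k) * Real.exp (-π * t ^ 2) : ℝ) : ℂ) := by
    ext t; simp only [psiPlus_eq_sum, ofReal_sum, smul_eq_mul, ofReal_mul]
  have hb : 1 / 4 - I * (I * (s - 1 / 2)) / 2 = s / 2 := by
    linear_combination (1 / 2 - s) / 2 * I_sq
  rw [hf, Pplus_eval_eq_sum, hb, mul_sum]
  refine hasMellin_finsetSum _ fun k _ ↦ ?_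
  obtain ⟨hconv, hval⟩ := hasMellin_pow_mul_exp_neg_pi_mul_sq hs k
  convert hasMellin_const_smul hconv ((2 * pplusCoeff l k * π ^ k : ℝ) : ℂ) using 1
  have hπ : (π : ℂ) ^ k ≠ 0 := pow_ne_zero _ (ofReal_ne_zero.mpr Real.pi_ne_zero)
  rw [hval, smul_eq_mul]
  push_cast
  field_simp

lemma pplusCoeff_eq_mul_descFactorial {l k : ℕ} (hk : k ≤ 2 * l) :
    pplusCoeff l k = (2 : ℝ) ^ (-(2 * l : ℝ) - 3 / 4) * Real.sqrt ((4 * l).factorial) /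
      (2 * l).factorial * ((-8) ^ k * (2 * l).descFactorial k / (2 * k).factorial) := by
  have h8 : (2 : ℝ) ^ ((3 * (k : ℝ)) - 2 * l - 3 / 4) = 8 ^ k * 2 ^ (-(2 * l : ℝ) - 3 / 4) := by
    rw [show (3 * (k : ℝ)) - 2 * l - 3 / 4 = (3 * k : ℕ) + (-(2 * l : ℝ) - 3 / 4) by
        push_cast; ring, Real.rpow_add two_pos, Real.rpow_natCast, pow_mul]
    norm_num
  have hfac : ((2 * l - k).factorial : ℝ) * (2 * l).descFactorial k = (2 * l).factorial := by
    exact_mod_cast Nat.factorial_mul_descFactorial hk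
  have h1 : ((2 * l - k).factorial : ℝ) ≠ 0 := by positivity
  have hdf : ((2 * l).descFactorial k : ℝ) = (2 * l).factorial / (2 * l - k).factorial := by
    rw [eq_div_iff h1, mul_comm, hfac]
  rw [pplusCoeff, h8, hdf, neg_pow (8 : ℝ)]
  field_simp

lemma exists_Pplus_eval_eq_hypergeomSum (l : ℕ) :
    ∃ K : ℝ, ∀ w : ℂ, (Pplus l).eval w = K * (hypergeomSum (1 / 4 - I * w / 2) (2 * l) - 1) := by
  refine ⟨(2 : ℝ) ^ (-(2 * l : ℝ) - 3 / 4) * Real.sqrt ((4 * l).factorial) / (2 * l).factorial,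
    fun w ↦ ?_⟩
  have hrange : range (2 * l + 1) = insert 0 (Icc 1 (2 * l)) := by
    ext; simp only [mem_range, mem_insert, mem_Icc]; omega
  rw [Pplus_eval_eq_sum, hypergeomSum, hrange, sum_insert (by simp), hypergeomTerm_zero,
    add_sub_cancel_left,
    mul_sum]
  refine sum_congr rfl fun k hk ↦ ?_
  rw [pplusCoeff_eq_mul_descFactorial (mem_Icc.mp hk).2, hypergeomTerm,
    descPochhammer_eval_eq_descFactorial]
  push_cast
  ring

lemma Pplus_eval_neg (l : ℕ) (w : ℂ) : (Pplus l).eval (-w) = (Pplus l).eval w := by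
  obtain ⟨K, hK⟩ := exists_Pplus_eval_eq_hypergeomSum l
  rw [hK, hK, show 1 / 4 - I * -w / 2 = 1 / 2 - (1 / 4 - I * w / 2) by ring,
    hypergeomSum_one_half_sub, pow_mul, neg_one_sq, one_pow, one_mul]

lemma Pplus_eval_I_div_two (l : ℕ) : (Pplus l).eval (I / 2) = 0 := by
  obtain ⟨K, hK⟩ := exists_Pplus_eval_eq_hypergeomSum l
  have hb : 1 / 4 - I * (I / 2) / 2 = 1 / 2 := by linear_combination -I_sq / 4
  rw [hK, hb, hypergeomSum_one_half, pow_mul, neg_one_sq, one_pow, sub_self, mul_zero]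

lemma Pplus_eval_conj (l : ℕ) (w : ℂ) : (Pplus l).eval (conj w) = conj ((Pplus l).eval w) := by
  obtain ⟨K, hK⟩ := exists_Pplus_eval_eq_hypergeomSum l
  have hb : conj (1 / 4 - I * w / 2) = 1 / 4 - I * -conj w / 2 := by simp [map_ofNat]
  rw [← Pplus_eval_neg, hK, hK, map_mul, conj_ofReal, map_sub, map_one, conj_hypergeomSum, hb]

lemma C_one_div_four_add_X_sq_dvd_Pplus (l : ℕ) : C (1 / 4 : ℂ) + X ^ 2 ∣ Pplus l := by
  have ha : I / 2 ≠ -(I / 2) := fun h ↦ I_ne_zero (by linear_combination h)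
  have hroot : (Pplus l).IsRoot (-(I / 2)) := by
    rw [IsRoot, Pplus_eval_neg, Pplus_eval_I_div_two]
  convert X_sq_sub_C_sq_dvd ha (Pplus_eval_I_div_two l) hroot using 1
  rw [div_pow, I_sq, show (-1 : ℂ) / 2 ^ 2 = -(1 / 4) by norm_num, C_neg]
  ring

theorem stmt16_general (l : ℕ) :
    (∀ s : ℝ,
        (∫ u in Set.Ioi (0 : ℝ),
            ((psiPlus l u : ℝ) : ℂ) * (u : ℂ) ^ ((1 : ℂ) / 2 - Complex.I * (s : ℂ)) / (u : ℂ))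
          = (Real.pi : ℂ) ^ (-((1 : ℂ) / 2 - Complex.I * (s : ℂ)) / 2) *
              Complex.Gamma (((1 : ℂ) / 2 - Complex.I * (s : ℂ)) / 2) *
              (Pplus l).eval (s : ℂ))
    ∧ (Polynomial.C (1 / 4 : ℂ) + Polynomial.X ^ 2) ∣ Pplus l
    ∧ (Pplus l).eval (Complex.I / 2) = 0
    ∧ (∀ z : ℂ, (Pplus l).eval (-z) = (Pplus l).eval z)
    ∧ (∀ k : ℕ, ((Pplus l).coeff k).im = 0) := by
  refine ⟨fun s ↦ ?_, C_one_div_four_add_X_sq_dvd_Pplus l, Pplus_eval_I_div_two l,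
    Pplus_eval_neg l, im_coeff_eq_zero_of_eval_conj (Pplus_eval_conj l)⟩
  have hs : 0 < ((1 : ℂ) / 2 - I * s).re := by simp
  have hσ : I * ((1 / 2 - I * s) - 1 / 2) = s := by linear_combination -(s : ℂ) * I_sq
  rw [← mellin_eq_setIntegral_mul_cpow_div, (hasMellin_psiPlus l hs).2, hσ, Gammaℝ_def]

/-- the Mellin transform of `ψ⁺_ℓ` equals `L_∞(1/2 - is) P⁺_ℓ(s)`, and `P⁺_ℓ`
is divisible by `1/4 + X²`, vanishes at `i/2`, is even, and has real coefficients. -/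
theorem stmt16 (l : ℕ) (hl : 1 ≤ l) :
    (∀ s : ℝ,
        (∫ u in Set.Ioi (0 : ℝ),
            ((psiPlus l u : ℝ) : ℂ) * (u : ℂ) ^ ((1 : ℂ) / 2 - Complex.I * (s : ℂ)) / (u : ℂ))
          = (Real.pi : ℂ) ^ (-((1 : ℂ) / 2 - Complex.I * (s : ℂ)) / 2) *
              Complex.Gamma (((1 : ℂ) / 2 - Complex.I * (s : ℂ)) / 2) *
              (Pplus l).eval (s : ℂ))
    ∧ (Polynomial.C (1 / 4 : ℂ) + Polynomial.X ^ 2) ∣ Pplus l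
    ∧ (Pplus l).eval (Complex.I / 2) = 0
    ∧ (∀ z : ℂ, (Pplus l).eval (-z) = (Pplus l).eval z)
    ∧ (∀ k : ℕ, ((Pplus l).coeff k).im = 0) :=
  stmt16_general l
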